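/- Let ρ_AB be a separable bipartite state on ℂ^{d_A} ⊗ ℂ^{d_B}, let a ∈ ℝ^m and b ∈ ℝ^n be arbitrary vectors, let {E^A_{α,k}} be an informationally complete (N_A,M_A)-POVM on ℂ^{d_A} with efficiency parameter x_A and {E^B_{β,l}} an informationally complete (N_B,M_B)-POVM on ℂ^{d_B} with efficiency parameter x_B. Then ‖Q_{a,b}(ρ_AB)‖_tr ≤ √(|a|² + (d_A−1)(M_A² x_A + d_A²)/(d_A M_A (M_A−1))) · √(|b|² + (d_B−1)(M_B² x_B + d_B²)/(d_B M_B (M_B−1))). -/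

import Mathlib

open scoped BigOperators ComplexOrder
open Matrix

noncomputable def traceNorm {m n : Type*} [Fintype m] [Fintype n] [DecidableEq n]
    (X : Matrix m n ℂ) : ℝ :=
  ((Matrix.posSemidef_conjTranspose_mul_self X).isHermitian.eigenvectorUnitary.1 *
    Matrix.diagonal (((↑) : ℝ → ℂ) ∘ (Real.sqrt ·) ∘
      (Matrix.posSemidef_conjTranspose_mul_self X).isHermitian.eigenvalues) *
    (star (Matrix.posSemidef_conjTranspose_mul_self X).isHermitian.eigenvectorUnitary :
      Matrix n n ℂ)).trace.re

def IsDensityMatrix {ι : Type*} [Fintype ι] (ρ : Matrix ι ι ℂ) : Prop :=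
  ρ.PosSemidef ∧ ρ.trace = 1

def IsNMPOVM (d N M : ℕ) (x : ℝ)
    (E : Fin N → Fin M → Matrix (Fin d) (Fin d) ℂ) : Prop :=
  (∀ α k, (E α k).PosSemidef) ∧
  (∀ α, ∑ k, E α k = 1) ∧
  (∀ α k, (E α k).trace = (((d : ℝ) / M : ℝ) : ℂ)) ∧
  (∀ α k, (E α k * E α k).trace = (x : ℂ)) ∧
  (∀ α k l, k ≠ l → (E α k * E α l).trace =
      ((((d : ℝ) - M * x) / (M * ((M : ℝ) - 1)) : ℝ) : ℂ)) ∧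
  (∀ α β k l, α ≠ β → (E α k * E β l).trace = (((d : ℝ) / M ^ 2 : ℝ) : ℂ)) ∧
  ((d : ℝ) / M ^ 2 < x ∧ x ≤ min ((d : ℝ) ^ 2 / M ^ 2) ((d : ℝ) / M))

def IsInfoComplete (d N M : ℕ) : Prop := ((M : ℝ) - 1) * N = (d : ℝ) ^ 2 - 1
open Kronecker

/-- Partial trace over the second factor. -/
noncomputable def ptraceB {dA dB : ℕ} (ρ : Matrix (Fin dA × Fin dB) (Fin dA × Fin dB) ℂ) :
    Matrix (Fin dA) (Fin dA) ℂ :=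
  Matrix.of fun i j => ∑ k, ρ (i, k) (j, k)

/-- Partial trace over the first factor. -/
noncomputable def ptraceA {dA dB : ℕ} (ρ : Matrix (Fin dA × Fin dB) (Fin dA × Fin dB) ℂ) :
    Matrix (Fin dB) (Fin dB) ℂ :=
  Matrix.of fun i j => ∑ k, ρ (k, i) (k, j)

/-- A bipartite state is separable if it is a finite convex combination of
tensor products of local density matrices. -/
def SeparableState {dA dB : ℕ} (ρ : Matrix (Fin dA × Fin dB) (Fin dA × Fin dB) ℂ) : Prop :=
  ∃ (K : ℕ) (p : Fin K → ℝ) (ρA : Fin K → Matrix (Fin dA) (Fin dA) ℂ)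
    (ρB : Fin K → Matrix (Fin dB) (Fin dB) ℂ),
    (∀ i, 0 ≤ p i) ∧ (∑ i, p i = 1) ∧
    (∀ i, IsDensityMatrix (ρA i)) ∧ (∀ i, IsDensityMatrix (ρB i)) ∧
    ρ = ∑ i, (p i : ℂ) • (ρA i ⊗ₖ ρB i)

/-!
A separable state is a convex combination `∑ pᵢ ρAᵢ ⊗ ρBᵢ`, so `Q_{a,b}(ρ) = ∑ pᵢ uᵢ vᵢᵀ`, where
`uᵢ = (a, τᵢ)` and `vᵢ = (b, σᵢ)` collect the local outcome probabilities. Writing this as `X Yᴴ`,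
the columns of `X` and `Y` being `√pᵢ uᵢ` and `√pᵢ vᵢ`, the trace norm is at most `‖X‖_F ‖Y‖_F`:
pair `X Yᴴ` with the partial isometry of its polar decomposition and apply Cauchy–Schwarz.

It remains to bound `∑ₚ tr(Eₚ σ)²` for a state `σ`. With `rₚ = tr(Eₚ σ) - 1/M`, `Z = ∑ rₚ Eₚ`
and `X = σ - I/d`, the symmetry conditions give `tr(Z X) = ∑ rₚ²` and `tr(Z²) = λ ∑ rₚ²` for
`λ = (M²x - d)/(M(M - 1)) > 0`, so Cauchy–Schwarz for the Hilbert–Schmidt inner product and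
`tr σ² ≤ 1` give `∑ rₚ² ≤ λ (1 - 1/d)`. Informational completeness turns `∑ rₚ² + N/M` into the
constant of the statement.
-/

namespace Matrix

variable {m n k K : Type*}

lemma re_trace_conjTranspose_mul_le [Fintype n] [Fintype k] (P R : Matrix k n ℂ) :
    (Pᴴ * R).trace.re ≤ √(Pᴴ * P).trace.re * √(Rᴴ * R).trace.re := by
  have hnorm (S : Matrix k n ℂ) : ‖WithLp.toLp 2 S.vec‖ = √(Sᴴ * S).trace.re := by
    rw [EuclideanSpace.norm_eq, ← star_vec_dotProduct_vec]
    simp [dotProduct, Complex.sq_norm, Complex.normSq_apply]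
  rw [← hnorm, ← hnorm, ← star_vec_dotProduct_vec, dotProduct_comm]
  exact re_inner_le_norm (𝕜 := ℂ) (WithLp.toLp 2 P.vec) (WithLp.toLp 2 R.vec)

lemma traceNorm_eq_sum_sqrt_eigenvalues [Fintype m] [Fintype n] [DecidableEq n]
    (A : Matrix m n ℂ) :
    traceNorm A = ∑ j, √((posSemidef_conjTranspose_mul_self A).isHermitian.eigenvalues j) := by
  rw [traceNorm, trace_mul_cycle, Unitary.coe_star_mul_self, one_mul, trace_diagonal,
    Complex.re_sum]
  rfl

/-- `A * U` has orthogonal columns of squared lengths the eigenvalues of `Aᴴ * A`; rescaling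
them to unit length (or zero) gives the partial isometry `W` of a polar decomposition. -/
lemma exists_partialIsometry_traceNorm_eq [Fintype m] [Fintype n] [DecidableEq n]
    (A : Matrix m n ℂ) :
    ∃ (W : Matrix m n ℂ) (U : Matrix n n ℂ), U * Uᴴ = 1 ∧ W * Wᴴ * W = W ∧
      traceNorm A = (Wᴴ * A * U).trace.re := by
  set hA := (posSemidef_conjTranspose_mul_self A).isHermitian
  have hspec := hA.spectral_theorem
  rw [Unitary.conjStarAlgAut_apply] at hspec
  set U : Matrix n n ℂ := ↑hA.eigenvectorUnitary
  set μ := hA.eigenvalues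
  have hμ : ∀ j, 0 ≤ μ j := (posSemidef_conjTranspose_mul_self A).eigenvalues_nonneg
  have hUU : star U * U = 1 := Unitary.coe_star_mul_self _
  have hD : (A * U)ᴴ * (A * U) = diagonal (fun j => (μ j : ℂ)) := by
    calc (A * U)ᴴ * (A * U) = star U * (Aᴴ * A) * U := by
          simp only [conjTranspose_mul, star_eq_conjTranspose, Matrix.mul_assoc]
      _ = (star U * U) * diagonal (RCLike.ofReal ∘ μ) * (star U * U) := by
          rw [hspec]
          simp only [Matrix.mul_assoc]
      _ = _ := by rw [hUU, Matrix.one_mul, Matrix.mul_one]; rfl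
  set S : Matrix n n ℂ := diagonal fun j => (((√(μ j))⁻¹ : ℝ) : ℂ)
  have hSH : Sᴴ = S := by simp [S, diagonal_conjTranspose]
  refine ⟨A * U * S, U, Unitary.coe_mul_star_self _, ?_, ?_⟩
  · calc A * U * S * (A * U * S)ᴴ * (A * U * S)
        = A * U * (S * Sᴴ * ((A * U)ᴴ * (A * U)) * S) := by
          simp only [conjTranspose_mul, Matrix.mul_assoc]
      _ = A * U * S := by
          rw [hD, hSH]
          simp only [S, diagonal_mul_diagonal, ← Complex.ofReal_mul]
          congr 3 with j
          rcases (hμ j).eq_or_lt with h | h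
          · simp [← h]
          · have hs : 0 < √(μ j) := Real.sqrt_pos.mpr h
            congr 1
            field_simp
            rw [Real.sq_sqrt h.le]
  · rw [Matrix.mul_assoc, conjTranspose_mul, hSH, Matrix.mul_assoc, hD,
      traceNorm_eq_sum_sqrt_eigenvalues, diagonal_mul_diagonal, trace_diagonal, Complex.re_sum]
    congr 1 with j
    rw [← Complex.ofReal_mul, Complex.ofReal_re, ← div_eq_inv_mul, Real.div_sqrt]

lemma re_trace_mul_partialIsometry_le [Fintype m] [Fintype n] [Fintype k] [DecidableEq m]
    {W : Matrix m n ℂ} (hW : W * Wᴴ * W = W) (X : Matrix k m ℂ) :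
    ((X * W)ᴴ * (X * W)).trace.re ≤ (Xᴴ * X).trace.re := by
  set G := X * (1 - W * Wᴴ)
  have hG : G * Gᴴ = X * Xᴴ - X * W * (X * W)ᴴ := by
    have hP : (1 - W * Wᴴ) * (1 - W * Wᴴ)ᴴ = 1 - W * Wᴴ := by
      simp only [conjTranspose_sub, conjTranspose_one, conjTranspose_mul,
        conjTranspose_conjTranspose, Matrix.sub_mul, Matrix.mul_sub, Matrix.one_mul,
        Matrix.mul_one, ← Matrix.mul_assoc, hW]
      abel
    simp only [G, conjTranspose_mul, Matrix.mul_assoc]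
    rw [← Matrix.mul_assoc (1 - W * Wᴴ), hP]
    simp only [Matrix.sub_mul, Matrix.mul_sub, Matrix.one_mul, Matrix.mul_assoc]
  have hnonneg : 0 ≤ (G * Gᴴ).trace.re :=
    (Complex.nonneg_iff.mp (posSemidef_self_mul_conjTranspose G).trace_nonneg).1
  rw [hG, trace_sub, Complex.sub_re, trace_mul_comm (X * W), trace_mul_comm X] at hnonneg
  linarith

theorem traceNorm_mul_conjTranspose_le [Fintype m] [Fintype n] [Fintype k] [DecidableEq m]
    [DecidableEq n] (X : Matrix m k ℂ) (Y : Matrix n k ℂ) :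
    traceNorm (X * Yᴴ) ≤ √(X * Xᴴ).trace.re * √(Y * Yᴴ).trace.re := by
  obtain ⟨W, U, hU, hW, htn⟩ := exists_partialIsometry_traceNorm_eq (X * Yᴴ)
  have hY : ((Yᴴ * U)ᴴ * (Yᴴ * U)).trace = (Y * Yᴴ).trace := by
    rw [conjTranspose_mul, conjTranspose_conjTranspose, Matrix.mul_assoc, trace_mul_comm]
    simp only [Matrix.mul_assoc, hU, Matrix.mul_one]
  calc traceNorm (X * Yᴴ) = ((Xᴴ * W)ᴴ * (Yᴴ * U)).trace.re := by
        rw [htn, conjTranspose_mul, conjTranspose_conjTranspose]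
        simp only [Matrix.mul_assoc]
    _ ≤ √((Xᴴ * W)ᴴ * (Xᴴ * W)).trace.re * √((Yᴴ * U)ᴴ * (Yᴴ * U)).trace.re :=
        re_trace_conjTranspose_mul_le _ _
    _ ≤ √(X * Xᴴ).trace.re * √(Y * Yᴴ).trace.re := by
        rw [hY]
        refine mul_le_mul_of_nonneg_right (Real.sqrt_le_sqrt ?_) (Real.sqrt_nonneg _)
        simpa using re_trace_mul_partialIsometry_le hW Xᴴ

lemma of_sqrt_mul_mul_conjTranspose [Fintype K] {p : K → ℝ} (hp : ∀ i, 0 ≤ p i) (u : K → m → ℝ)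
    (v : K → n → ℝ) :
    of (fun r i => ((√(p i) * u i r : ℝ) : ℂ)) * (of fun s i => ((√(p i) * v i s : ℝ) : ℂ))ᴴ =
      ∑ i, (p i : ℂ) • vecMulVec (fun r => (u i r : ℂ)) (fun s => (v i s : ℂ)) := by
  ext r s
  simp only [mul_apply, conjTranspose_apply, of_apply, sum_apply, smul_apply, vecMulVec_apply,
    smul_eq_mul, Complex.star_def, Complex.conj_ofReal]
  refine Finset.sum_congr rfl fun i _ => ?_
  simp only [← Complex.ofReal_mul]
  congr 1
  linear_combination (u i r * v i s) * Real.mul_self_sqrt (hp i)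

lemma re_trace_sum_smul_vecMulVec_self [Fintype m] [Fintype K] (p : K → ℝ) (u : K → m → ℝ) :
    (∑ i, (p i : ℂ) • vecMulVec (fun r => (u i r : ℂ)) (fun r => (u i r : ℂ))).trace.re =
      ∑ i, p i * ∑ r, u i r ^ 2 := by
  simp only [trace_sum, trace_smul, trace_vecMulVec, dotProduct, smul_eq_mul,
    ← Complex.ofReal_mul, ← Complex.ofReal_sum, Complex.ofReal_re, sq]

theorem traceNorm_sum_smul_vecMulVec_le [Fintype m] [Fintype n] [Fintype K] [DecidableEq m]
    [DecidableEq n] {p : K → ℝ} (hp : ∀ i, 0 ≤ p i) (u : K → m → ℝ) (v : K → n → ℝ) :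
    traceNorm (∑ i, (p i : ℂ) • vecMulVec (fun r => (u i r : ℂ)) (fun s => (v i s : ℂ))) ≤
      √(∑ i, p i * ∑ r, u i r ^ 2) * √(∑ i, p i * ∑ s, v i s ^ 2) := by
  rw [← of_sqrt_mul_mul_conjTranspose hp, ← re_trace_sum_smul_vecMulVec_self,
    ← re_trace_sum_smul_vecMulVec_self, ← of_sqrt_mul_mul_conjTranspose hp,
    ← of_sqrt_mul_mul_conjTranspose hp]
  exact traceNorm_mul_conjTranspose_le _ _

end Matrix

lemma Matrix.IsHermitian.ofReal_re_trace_mul {ι : Type*} [Fintype ι] {A B : Matrix ι ι ℂ}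
    (hA : A.IsHermitian) (hB : B.IsHermitian) : (((A * B).trace.re : ℝ) : ℂ) = (A * B).trace := by
  refine Complex.conj_eq_iff_re.mp ?_
  rw [← Complex.star_def, ← Matrix.trace_conjTranspose, Matrix.conjTranspose_mul, hA.eq, hB.eq,
    Matrix.trace_mul_comm]

/-- Cauchy–Schwarz for the Hilbert–Schmidt inner product, read off from `0 ≤ tr((Z - c X)²)`. -/
lemma Matrix.IsHermitian.le_mul_re_trace_mul_self {ι : Type*} [Fintype ι] {Z X : Matrix ι ι ℂ}
    (hZ : Z.IsHermitian) (hX : X.IsHermitian) {c R : ℝ} (hc : 0 < c)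
    (hZZ : (Z * Z).trace = ((c * R : ℝ) : ℂ)) (hZX : (Z * X).trace = R) :
    R ≤ c * (X * X).trace.re := by
  set B := Z - (c : ℂ) • X
  have hB : B * B = Bᴴ * B := by
    rw [Matrix.conjTranspose_sub, Matrix.conjTranspose_smul, hZ.eq, hX.eq, Complex.star_def,
      Complex.conj_ofReal]
  have hBB : (B * B).trace.re = c * (c * (X * X).trace.re - R) := by
    simp only [B, Matrix.sub_mul, Matrix.mul_sub, Matrix.smul_mul, Matrix.mul_smul,
      Matrix.trace_sub, Matrix.trace_smul, smul_eq_mul, Matrix.trace_mul_comm X Z, hZZ, hZX,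
      Complex.sub_re, Complex.re_ofReal_mul, Complex.ofReal_re, ← Complex.ofReal_mul]
    ring
  have h0 : 0 ≤ (B * B).trace.re := by
    rw [hB]
    exact (Complex.nonneg_iff.mp (Matrix.posSemidef_conjTranspose_mul_self B).trace_nonneg).1
  nlinarith

lemma Matrix.IsHermitian.trace_mul_self {ι : Type*} [Fintype ι] [DecidableEq ι]
    {A : Matrix ι ι ℂ} (hA : A.IsHermitian) :
    (A * A).trace = ∑ i, ((hA.eigenvalues i ^ 2 : ℝ) : ℂ) := by
  conv_lhs => rw [hA.spectral_theorem, ← map_mul, Unitary.conjStarAlgAut_apply]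
  rw [Matrix.trace_mul_cycle, Unitary.coe_star_mul_self, Matrix.one_mul,
    Matrix.diagonal_mul_diagonal, Matrix.trace_diagonal]
  simp [sq]

lemma IsDensityMatrix.re_trace_mul_self_le_one {ι : Type*} [Fintype ι] [DecidableEq ι]
    {σ : Matrix ι ι ℂ} (hσ : IsDensityMatrix σ) : (σ * σ).trace.re ≤ 1 := by
  have hsum : ∑ i, hσ.1.1.eigenvalues i = 1 := by
    simpa using congrArg Complex.re (hσ.1.1.trace_eq_sum_eigenvalues.symm.trans hσ.2)
  rw [hσ.1.1.trace_mul_self, ← Complex.ofReal_sum, Complex.ofReal_re]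
  calc ∑ i, hσ.1.1.eigenvalues i ^ 2 ≤ (∑ i, hσ.1.1.eigenvalues i) ^ 2 :=
        Finset.sum_sq_le_sq_sum_of_nonneg fun i _ => hσ.1.eigenvalues_nonneg i
    _ = 1 := by rw [hsum, one_pow]

lemma IsDensityMatrix.re_trace_sub_smul_one_mul_self_le {ι : Type*} [Fintype ι] [DecidableEq ι]
    {σ : Matrix ι ι ℂ} (hσ : IsDensityMatrix σ) :
    ((σ - ((1 / Fintype.card ι : ℝ) : ℂ) • 1) * (σ - ((1 / Fintype.card ι : ℝ) : ℂ) • 1)).trace.re ≤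
      1 - 1 / Fintype.card ι := by
  set c : ℝ := 1 / Fintype.card ι
  have hc : c * (c * Fintype.card ι) = c := by
    rcases eq_or_ne (Fintype.card ι : ℝ) 0 with h | h <;> simp [c, h]
  have hσσ := hσ.re_trace_mul_self_le_one
  simp only [Matrix.sub_mul, Matrix.mul_sub, Matrix.smul_mul, Matrix.mul_smul,
    Matrix.one_mul, Matrix.mul_one, Matrix.trace_sub, Matrix.trace_smul, Matrix.trace_one,
    hσ.2, smul_eq_mul, Complex.sub_re, Complex.re_ofReal_mul, Complex.one_re, Complex.natCast_re]
  linarith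

lemma Finset.sum_sum_mul_mul_block_eq_of_row_sum_zero {ι κ : Type*} [Fintype ι] [Fintype κ]
    [DecidableEq ι] [DecidableEq κ] {r : ι × κ → ℝ} (hr : ∀ i, ∑ k, r (i, k) = 0) (a b c : ℝ) :
    ∑ p, ∑ q, r p * r q * (a + (if p.1 = q.1 then b else 0) + (if p = q then c else 0)) =
      c * ∑ p, r p ^ 2 := by
  have hrow (p : ι × κ) : ∑ q : ι × κ, (if p.1 = q.1 then r q else 0) = 0 := by
    rw [Fintype.sum_prod_type, Finset.sum_eq_single p.1 (fun i _ hi => by simp [Ne.symm hi])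
      (by simp)]
    simp [hr]
  have htot : ∑ q, r q = 0 := by simp [Fintype.sum_prod_type, hr]
  simp only [mul_add, mul_ite, mul_zero, Finset.sum_add_distrib, Finset.sum_ite_eq,
    Finset.mem_univ, if_true, ← Finset.sum_mul, ← Finset.mul_sum]
  have hmid : ∑ p : ι × κ, ∑ q : ι × κ, (if p.1 = q.1 then r p * r q * b else 0) = 0 :=
    Finset.sum_eq_zero fun p _ => by
      have h := congrArg (r p * b * ·) (hrow p)
      simp only [mul_zero, Finset.mul_sum, mul_ite] at h
      exact (Finset.sum_congr rfl fun q _ => by split_ifs <;> ring).trans h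
  rw [hmid, htot]
  simp only [sq]
  ring

lemma sum_mul_sum_sq_sum_elim_le {ι κ K : Type*} [Fintype ι] [Fintype κ] [Fintype K]
    {p : K → ℝ} (hp0 : ∀ i, 0 ≤ p i) (hp1 : ∑ i, p i = 1) (a : ι → ℝ) {τ : K → κ → ℝ} {c : ℝ}
    (hτ : ∀ i, ∑ q, τ i q ^ 2 ≤ c) :
    ∑ i, p i * ∑ r, Sum.elim a (τ i) r ^ 2 ≤ ∑ r, a r ^ 2 + c := by
  calc ∑ i, p i * ∑ r, Sum.elim a (τ i) r ^ 2 ≤ ∑ i, p i * (∑ r, a r ^ 2 + c) := by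
        gcongr with i
        · exact hp0 i
        · simpa [Fintype.sum_sum_type] using hτ i
    _ = ∑ r, a r ^ 2 + c := by rw [← Finset.sum_mul, hp1, one_mul]

namespace IsNMPOVM

variable {d N M : ℕ} {x : ℝ} {E : Fin N → Fin M → Matrix (Fin d) (Fin d) ℂ}

lemma two_le_M (hE : IsNMPOVM d N M x E) : 2 ≤ M := by
  obtain ⟨-, -, -, -, -, -, hlo, hhi⟩ := hE
  by_contra! hM
  interval_cases M <;> norm_num at hlo hhi <;> linarith

lemma d_pos (hE : IsNMPOVM d N M x E) : 0 < d := by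
  obtain ⟨-, -, -, -, -, -, hlo, hhi⟩ := hE
  by_contra! hd
  interval_cases d
  norm_num at hlo hhi
  linarith

/-- `(M²x - d)/(M(M - 1))` is the gap `tr(E_{α,k}²) - tr(E_{α,k} E_{α,l})` between the diagonal
and off-diagonal Gram entries within one POVM. -/
lemma gap_pos (hE : IsNMPOVM d N M x E) : 0 < (M ^ 2 * x - d) / (M * (M - 1)) := by
  have hM : (2 : ℝ) ≤ M := by exact_mod_cast hE.two_le_M
  have hx := hE.2.2.2.2.2.2.1
  rw [div_lt_iff₀ (by positivity)] at hx
  exact div_pos (by linarith) (by nlinarith)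

lemma trace_mul_eq (hE : IsNMPOVM d N M x E) (p q : Fin N × Fin M) :
    (E p.1 p.2 * E q.1 q.2).trace = ((d / M ^ 2 +
      (if p.1 = q.1 then (d - M * x) / (M * (M - 1)) - d / M ^ 2 else 0) +
      (if p = q then (M ^ 2 * x - d) / (M * (M - 1)) else 0) : ℝ) : ℂ) := by
  have hM : (2 : ℝ) ≤ M := by exact_mod_cast hE.two_le_M
  obtain ⟨-, -, -, hsame, hrow, hcross, -⟩ := hE
  rcases eq_or_ne p q with rfl | hpq
  · rw [hsame, if_pos rfl, if_pos rfl]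
    congr 1
    have : (M : ℝ) - 1 ≠ 0 := by linarith
    field_simp
    ring
  rcases eq_or_ne p.1 q.1 with hα | hα
  · have hk : p.2 ≠ q.2 := fun hk => hpq (Prod.ext hα hk)
    rw [← hα, hrow _ _ _ hk]
    simp [hpq]
  · simp [hcross _ _ _ _ hα, hα, hpq]

lemma trace_sum_smul_mul_self (hE : IsNMPOVM d N M x E) {r : Fin N × Fin M → ℝ}
    (hr : ∀ α, ∑ k, r (α, k) = 0) :
    ((∑ p, (r p : ℂ) • E p.1 p.2) * ∑ p, (r p : ℂ) • E p.1 p.2).trace =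
      (((M ^ 2 * x - d) / (M * (M - 1)) * ∑ p, r p ^ 2 : ℝ) : ℂ) := by
  rw [← Finset.sum_sum_mul_mul_block_eq_of_row_sum_zero hr (d / M ^ 2)
    ((d - M * x) / (M * (M - 1)) - d / M ^ 2)]
  simp only [Finset.sum_mul_sum, Matrix.trace_sum, Matrix.smul_mul, Matrix.mul_smul,
    Matrix.trace_smul, hE.trace_mul_eq, smul_eq_mul, ← Complex.ofReal_mul, ← Complex.ofReal_sum]
  exact congrArg _ (Finset.sum_congr rfl fun p _ => Finset.sum_congr rfl fun q _ => by ring)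

lemma sum_re_trace_mul (hE : IsNMPOVM d N M x E) {σ : Matrix (Fin d) (Fin d) ℂ}
    (hσ : IsDensityMatrix σ) (α : Fin N) : ∑ k, (E α k * σ).trace.re = 1 := by
  rw [← Complex.re_sum, ← Matrix.trace_sum, ← Matrix.sum_mul, hE.2.1 α, Matrix.one_mul, hσ.2,
    Complex.one_re]

lemma trace_mul_sub_smul_one (hE : IsNMPOVM d N M x E) {σ : Matrix (Fin d) (Fin d) ℂ}
    (hσ : σ.IsHermitian) (α : Fin N) (k : Fin M) :
    (E α k * (σ - ((1 / d : ℝ) : ℂ) • 1)).trace = (((E α k * σ).trace.re - 1 / M : ℝ) : ℂ) := by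
  have hd : (d : ℂ) ≠ 0 := by exact_mod_cast hE.d_pos.ne'
  rw [Matrix.mul_sub, Matrix.trace_sub, Matrix.mul_smul, Matrix.mul_one, Matrix.trace_smul,
    hE.2.2.1, ← (hE.1 α k).1.ofReal_re_trace_mul hσ, smul_eq_mul, Complex.ofReal_re]
  push_cast
  field_simp

lemma sum_sq_sub_inv_le (hE : IsNMPOVM d N M x E) {σ : Matrix (Fin d) (Fin d) ℂ}
    (hσ : IsDensityMatrix σ) :
    ∑ p : Fin N × Fin M, ((E p.1 p.2 * σ).trace.re - 1 / M) ^ 2 ≤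
      (M ^ 2 * x - d) / (M * (M - 1)) * (1 - 1 / d) := by
  set r : Fin N × Fin M → ℝ := fun p => (E p.1 p.2 * σ).trace.re - 1 / M
  set X : Matrix (Fin d) (Fin d) ℂ := σ - ((1 / d : ℝ) : ℂ) • 1
  set Z : Matrix (Fin d) (Fin d) ℂ := ∑ p, (r p : ℂ) • E p.1 p.2
  have hX : X.IsHermitian := hσ.1.1.sub (Matrix.isHermitian_one.smul (Complex.conj_ofReal _))
  have hZ : Z.IsHermitian :=
    isSelfAdjoint_sum _ fun p _ => (hE.1 p.1 p.2).1.smul (Complex.conj_ofReal _)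
  have hrow (α : Fin N) : ∑ k, r (α, k) = 0 := by
    have hM : (M : ℝ) ≠ 0 := by have := hE.two_le_M; positivity
    simp only [r, Finset.sum_sub_distrib, hE.sum_re_trace_mul hσ α, Finset.sum_const,
      Finset.card_univ, Fintype.card_fin, nsmul_eq_mul, mul_one_div_cancel hM, sub_self]
  have hZX : (Z * X).trace = ((∑ p, r p ^ 2 : ℝ) : ℂ) := by
    simp only [Z, X, Matrix.sum_mul, Matrix.trace_sum, Matrix.smul_mul, Matrix.trace_smul,
      hE.trace_mul_sub_smul_one hσ.1.1, smul_eq_mul, ← Complex.ofReal_mul, ← Complex.ofReal_sum,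
      sq]
    rfl
  have hXX : (X * X).trace.re ≤ 1 - 1 / d := by
    simpa only [Fintype.card_fin] using hσ.re_trace_sub_smul_one_mul_self_le
  calc _ ≤ (M ^ 2 * x - d) / (M * (M - 1)) * (X * X).trace.re :=
        hZ.le_mul_re_trace_mul_self hX hE.gap_pos (hE.trace_sum_smul_mul_self hrow) hZX
    _ ≤ _ := mul_le_mul_of_nonneg_left hXX hE.gap_pos.le

theorem sum_sq_re_trace_mul_le (hE : IsNMPOVM d N M x E) (hIC : IsInfoComplete d N M)
    {σ : Matrix (Fin d) (Fin d) ℂ} (hσ : IsDensityMatrix σ) :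
    ∑ p : Fin N × Fin M, (E p.1 p.2 * σ).trace.re ^ 2 ≤
      ((d : ℝ) - 1) * ((M : ℝ) ^ 2 * x + (d : ℝ) ^ 2) / ((d : ℝ) * M * ((M : ℝ) - 1)) := by
  have hM : (2 : ℝ) ≤ M := by exact_mod_cast hE.two_le_M
  have hd : (0 : ℝ) < d := by exact_mod_cast hE.d_pos
  have hM1 : (M : ℝ) - 1 ≠ 0 := by linarith
  have htot : ∑ p : Fin N × Fin M, (E p.1 p.2 * σ).trace.re = N := by
    simp [Fintype.sum_prod_type, hE.sum_re_trace_mul hσ]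
  have hcentre : ∑ p : Fin N × Fin M, (E p.1 p.2 * σ).trace.re ^ 2 =
      ∑ p : Fin N × Fin M, ((E p.1 p.2 * σ).trace.re - 1 / M) ^ 2 + N / M := by
    simp only [sub_sq, Finset.sum_add_distrib, Finset.sum_sub_distrib, ← Finset.sum_mul,
      ← Finset.mul_sum, htot, Finset.sum_const, Finset.card_univ, Fintype.card_prod,
      Fintype.card_fin, nsmul_eq_mul]
    push_cast
    field_simp
    ring
  have hN : (N : ℝ) = (d ^ 2 - 1) / (M - 1) := by
    rw [eq_div_iff hM1, mul_comm]
    exact hIC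
  calc _ = _ := hcentre
    _ ≤ (M ^ 2 * x - d) / (M * (M - 1)) * (1 - 1 / d) + N / M := by
        gcongr
        exact hE.sum_sq_sub_inv_le hσ
    _ = _ := by
        rw [hN]
        field_simp
        ring

end IsNMPOVM

lemma trace_mul_ptraceB {dA dB : ℕ} (E : Matrix (Fin dA) (Fin dA) ℂ)
    (ρ : Matrix (Fin dA × Fin dB) (Fin dA × Fin dB) ℂ) :
    (E * ptraceB ρ).trace = ((E ⊗ₖ (1 : Matrix (Fin dB) (Fin dB) ℂ)) * ρ).trace := by
  simp only [trace, ptraceB, diag_apply, mul_apply, of_apply, Finset.mul_sum,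
    kroneckerMap_apply, one_apply, mul_ite, mul_one, mul_zero, ite_mul, zero_mul,
    Fintype.sum_prod_type, Finset.sum_ite_eq, Finset.mem_univ, if_true]
  exact Finset.sum_congr rfl fun _ _ => Finset.sum_comm

lemma trace_mul_ptraceA {dA dB : ℕ} (F : Matrix (Fin dB) (Fin dB) ℂ)
    (ρ : Matrix (Fin dA × Fin dB) (Fin dA × Fin dB) ℂ) :
    (F * ptraceA ρ).trace = (((1 : Matrix (Fin dA) (Fin dA) ℂ) ⊗ₖ F) * ρ).trace := by
  simp only [trace, ptraceA, diag_apply, mul_apply, of_apply, Finset.mul_sum,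
    kroneckerMap_apply, one_apply, ite_mul, one_mul, zero_mul, Fintype.sum_prod_type,
    Finset.sum_ite_irrel, Finset.sum_const_zero, Finset.sum_ite_eq, Finset.mem_univ, if_true]
  rw [eq_comm, Finset.sum_comm]
  exact Finset.sum_congr rfl fun _ _ => Finset.sum_comm

lemma trace_kronecker_mul_sum_smul_kronecker {m n K : Type*} [Fintype m] [Fintype n] [Fintype K]
    (E : Matrix m m ℂ) (F : Matrix n n ℂ) (p : K → ℝ) (ρA : K → Matrix m m ℂ)
    (ρB : K → Matrix n n ℂ) :
    ((E ⊗ₖ F) * ∑ i, (p i : ℂ) • (ρA i ⊗ₖ ρB i)).trace =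
      ∑ i, p i * ((E * ρA i).trace * (F * ρB i).trace) := by
  simp only [Matrix.mul_sum, Matrix.mul_smul, trace_sum, trace_smul, ← mul_kronecker_mul,
    trace_kronecker, smul_eq_mul]

/-- The matrix `Q_{a,b}(ρ)`. -/
noncomputable def correlationMatrix {dA dB NA MA NB MB m n : ℕ} (a : Fin m → ℝ) (b : Fin n → ℝ)
    (EA : Fin NA → Fin MA → Matrix (Fin dA) (Fin dA) ℂ)
    (EB : Fin NB → Fin MB → Matrix (Fin dB) (Fin dB) ℂ)
    (ρ : Matrix (Fin dA × Fin dB) (Fin dA × Fin dB) ℂ) :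
    Matrix (Fin m ⊕ Fin NA × Fin MA) (Fin n ⊕ Fin NB × Fin MB) ℂ :=
  Matrix.fromBlocks
    (Matrix.of fun (i : Fin m) (j : Fin n) => ((a i : ℂ) * (b j : ℂ)))
    (Matrix.of fun (i : Fin m) (q : Fin NB × Fin MB) =>
      (a i : ℂ) * (EB q.1 q.2 * ptraceA ρ).trace)
    (Matrix.of fun (p : Fin NA × Fin MA) (j : Fin n) =>
      (EA p.1 p.2 * ptraceB ρ).trace * (b j : ℂ))
    (Matrix.of fun (p : Fin NA × Fin MA) (q : Fin NB × Fin MB) =>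
      ((EA p.1 p.2 ⊗ₖ EB q.1 q.2) * ρ).trace)

theorem correlationMatrix_sum_smul_kronecker {dA dB NA MA NB MB m n K : ℕ} (a : Fin m → ℝ)
    (b : Fin n → ℝ) {EA : Fin NA → Fin MA → Matrix (Fin dA) (Fin dA) ℂ}
    {EB : Fin NB → Fin MB → Matrix (Fin dB) (Fin dB) ℂ} (hEA : ∀ α k, (EA α k).IsHermitian)
    (hEB : ∀ β l, (EB β l).IsHermitian) {p : Fin K → ℝ} (hp : ∑ i, p i = 1)
    {ρA : Fin K → Matrix (Fin dA) (Fin dA) ℂ} {ρB : Fin K → Matrix (Fin dB) (Fin dB) ℂ}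
    (hρA : ∀ i, IsDensityMatrix (ρA i)) (hρB : ∀ i, IsDensityMatrix (ρB i)) :
    correlationMatrix a b EA EB (∑ i, (p i : ℂ) • (ρA i ⊗ₖ ρB i)) =
      ∑ i, (p i : ℂ) • vecMulVec
        (fun r => ((Sum.elim a (fun q => (EA q.1 q.2 * ρA i).trace.re) r : ℝ) : ℂ))
        (fun s => ((Sum.elim b (fun q => (EB q.1 q.2 * ρB i).trace.re) s : ℝ) : ℂ)) := by
  have hpC : ∑ i, (p i : ℂ) = 1 := by exact_mod_cast hp
  have hA (i : Fin K) (q : Fin NA × Fin MA) :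
      (((EA q.1 q.2 * ρA i).trace.re : ℝ) : ℂ) = (EA q.1 q.2 * ρA i).trace :=
    (hEA q.1 q.2).ofReal_re_trace_mul (hρA i).1.1
  have hB (i : Fin K) (q : Fin NB × Fin MB) :
      (((EB q.1 q.2 * ρB i).trace.re : ℝ) : ℂ) = (EB q.1 q.2 * ρB i).trace :=
    (hEB q.1 q.2).ofReal_re_trace_mul (hρB i).1.1
  ext (r | qA) (s | qB) <;>
    simp only [correlationMatrix, fromBlocks_apply₁₁, fromBlocks_apply₁₂, fromBlocks_apply₂₁,
      fromBlocks_apply₂₂, of_apply, Matrix.sum_apply, Matrix.smul_apply, vecMulVec_apply,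
      Sum.elim_inl, Sum.elim_inr, smul_eq_mul, hA, hB, trace_mul_ptraceA, trace_mul_ptraceB,
      trace_kronecker_mul_sum_smul_kronecker, Matrix.one_mul, fun i => (hρA i).2,
      fun i => (hρB i).2]
  · rw [← Finset.sum_mul, hpC, one_mul]
  · rw [Finset.mul_sum]
    exact Finset.sum_congr rfl fun _ _ => by ring
  · rw [Finset.sum_mul]
    exact Finset.sum_congr rfl fun _ _ => by ring

theorem separability_criterion_NM_POVM_general
    (dA dB NA MA NB MB m n : ℕ) (xA xB : ℝ)
    (EA : Fin NA → Fin MA → Matrix (Fin dA) (Fin dA) ℂ)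
    (EB : Fin NB → Fin MB → Matrix (Fin dB) (Fin dB) ℂ)
    (hEA : IsNMPOVM dA NA MA xA EA) (hICA : IsInfoComplete dA NA MA)
    (hEB : IsNMPOVM dB NB MB xB EB) (hICB : IsInfoComplete dB NB MB)
    (a : Fin m → ℝ) (b : Fin n → ℝ)
    (ρ : Matrix (Fin dA × Fin dB) (Fin dA × Fin dB) ℂ)
    (hsep : SeparableState ρ) :
    traceNorm (Matrix.fromBlocks
      (Matrix.of fun (i : Fin m) (j : Fin n) => ((a i : ℂ) * (b j : ℂ)))
      (Matrix.of fun (i : Fin m) (q : Fin NB × Fin MB) =>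
        (a i : ℂ) * (EB q.1 q.2 * ptraceA ρ).trace)
      (Matrix.of fun (p : Fin NA × Fin MA) (j : Fin n) =>
        (EA p.1 p.2 * ptraceB ρ).trace * (b j : ℂ))
      (Matrix.of fun (p : Fin NA × Fin MA) (q : Fin NB × Fin MB) =>
        ((EA p.1 p.2 ⊗ₖ EB q.1 q.2) * ρ).trace)) ≤
    Real.sqrt (∑ i, a i ^ 2 +
        ((dA : ℝ) - 1) * ((MA : ℝ) ^ 2 * xA + (dA : ℝ) ^ 2) /
          ((dA : ℝ) * MA * ((MA : ℝ) - 1))) *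
    Real.sqrt (∑ j, b j ^ 2 +
        ((dB : ℝ) - 1) * ((MB : ℝ) ^ 2 * xB + (dB : ℝ) ^ 2) /
          ((dB : ℝ) * MB * ((MB : ℝ) - 1))) := by
  obtain ⟨K, p, ρA, ρB, hp0, hp1, hρA, hρB, rfl⟩ := hsep
  change traceNorm (correlationMatrix a b EA EB _) ≤ _
  rw [correlationMatrix_sum_smul_kronecker a b (fun α k => (hEA.1 α k).1)
    (fun β l => (hEB.1 β l).1) hp1 hρA hρB]
  refine (traceNorm_sum_smul_vecMulVec_le hp0 _ _).trans ?_
  gcongr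
  · exact sum_mul_sum_sq_sum_elim_le hp0 hp1 a fun i => hEA.sum_sq_re_trace_mul_le hICA (hρA i)
  · exact sum_mul_sum_sq_sum_elim_le hp0 hp1 b fun i => hEB.sum_sq_re_trace_mul_le hICB (hρB i)

/-- Theorem 1 of the paper: for a separable bipartite state ρ_AB,
arbitrary real vectors a, b, and informationally complete (N_A,M_A)- and
(N_B,M_B)-POVMs on the two subsystems,
‖Q_{a,b}(ρ_AB)‖_tr ≤ √(|a|² + (d_A−1)(M_A²x_A + d_A²)/(d_A M_A(M_A−1))) ·
√(|b|² + (d_B−1)(M_B²x_B + d_B²)/(d_B M_B(M_B−1))). -/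
theorem separability_criterion_NM_POVM
    (dA dB NA MA NB MB m n : ℕ) (xA xB : ℝ)
    (EA : Fin NA → Fin MA → Matrix (Fin dA) (Fin dA) ℂ)
    (EB : Fin NB → Fin MB → Matrix (Fin dB) (Fin dB) ℂ)
    (hEA : IsNMPOVM dA NA MA xA EA) (hICA : IsInfoComplete dA NA MA)
    (hEB : IsNMPOVM dB NB MB xB EB) (hICB : IsInfoComplete dB NB MB)
    (a : Fin m → ℝ) (b : Fin n → ℝ)
    (ρ : Matrix (Fin dA × Fin dB) (Fin dA × Fin dB) ℂ)
    (hρ : IsDensityMatrix ρ) (hsep : SeparableState ρ) :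
    traceNorm (Matrix.fromBlocks
      (Matrix.of fun (i : Fin m) (j : Fin n) => ((a i : ℂ) * (b j : ℂ)))
      (Matrix.of fun (i : Fin m) (q : Fin NB × Fin MB) =>
        (a i : ℂ) * (EB q.1 q.2 * ptraceA ρ).trace)
      (Matrix.of fun (p : Fin NA × Fin MA) (j : Fin n) =>
        (EA p.1 p.2 * ptraceB ρ).trace * (b j : ℂ))
      (Matrix.of fun (p : Fin NA × Fin MA) (q : Fin NB × Fin MB) =>
        ((EA p.1 p.2 ⊗ₖ EB q.1 q.2) * ρ).trace)) ≤
    Real.sqrt (∑ i, a i ^ 2 +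
        ((dA : ℝ) - 1) * ((MA : ℝ) ^ 2 * xA + (dA : ℝ) ^ 2) /
          ((dA : ℝ) * MA * ((MA : ℝ) - 1))) *
    Real.sqrt (∑ j, b j ^ 2 +
        ((dB : ℝ) - 1) * ((MB : ℝ) ^ 2 * xB + (dB : ℝ) ^ 2) /
          ((dB : ℝ) * MB * ((MB : ℝ) - 1))) :=
  separability_criterion_NM_POVM_general dA dB NA MA NB MB m n xA xB EA EB hEA hICA hEB hICB a b ρ
    hsep
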